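/- arXiv:0905.1426 — 4 statements merged into one kernel-verified Lean document; each statement's English description precedes it below -/
import Mathlib

section
/- Let S be an n×n matrix with entries in {0,1} such that in each column the 1's occur in consecutive row positions (i.e., form an interval of rows). Then det(S) ∈ {-1, 0, 1}. -/
/-- A 0/1, downward-closed column is the indicator of an initial segment. -/
lemma aux_char {m : ℕ} (f : Fin m → ℤ)
    (h01 : ∀ i, f i = 0 ∨ f i = 1)
    (dc : ∀ i' i : Fin m, i' ≤ i → f i = 1 → f i' = 1) (i : Fin m) :
    f i = 1 ↔ (i : ℕ) < (Finset.univ.filter (fun i => f i = 1)).card := by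
  set F := Finset.univ.filter (fun i => f i = 1) with hF
  constructor
  · intro h1
    have hsub : Finset.Iic i ⊆ F := by
      intro i' hi'
      simp only [hF, Finset.mem_filter, Finset.mem_univ, true_and]
      exact dc i' i (Finset.mem_Iic.mp hi') h1
    have := Finset.card_le_card hsub
    rw [Fin.card_Iic] at this
    omega
  · intro hlt
    rcases h01 i with h0 | h1
    · exfalso
      have hsub : F ⊆ Finset.Iio i := by
        intro i' hi'
        simp only [hF, Finset.mem_filter, Finset.mem_univ, true_and] at hi'
        rw [Finset.mem_Iio]
        by_contra hle
        push_neg at hle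
        have := dc i i' hle hi'
        rw [h0] at this
        norm_num at this
      have := Finset.card_le_card hsub
      rw [Fin.card_Iio] at this
      omega
    · exact h1

/-- One column-subtraction step. -/
lemma aux_step {n : ℕ} (S : Matrix (Fin (n + 1)) (Fin (n + 1)) ℤ)
    (h01 : ∀ i j, S i j = 0 ∨ S i j = 1)
    (hint : ∀ j, ∀ i₁ i₂ i₃ : Fin (n + 1), i₁ ≤ i₂ → i₂ ≤ i₃ →
      S i₁ j = 1 → S i₃ j = 1 → S i₂ j = 1)
    (j0 j1 : Fin (n + 1)) (hne : j0 ≠ j1) (hj0 : S 0 j0 = 1) (hj1 : S 0 j1 = 1)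
    (hc : (Finset.univ.filter (fun i => S i j0 = 1)).card ≤
          (Finset.univ.filter (fun i => S i j1 = 1)).card) :
    ∃ S' : Matrix (Fin (n + 1)) (Fin (n + 1)) ℤ,
      (∀ i j, S' i j = 0 ∨ S' i j = 1) ∧
      (∀ j, ∀ i₁ i₂ i₃ : Fin (n + 1), i₁ ≤ i₂ → i₂ ≤ i₃ →
        S' i₁ j = 1 → S' i₃ j = 1 → S' i₂ j = 1) ∧
      S'.det = S.det ∧
      (Finset.univ.filter (fun j => S' 0 j = 1)) =
        (Finset.univ.filter (fun j => S 0 j = 1)).erase j1 := by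
  set c0 := (Finset.univ.filter (fun i => S i j0 = 1)).card with hc0
  set c1 := (Finset.univ.filter (fun i => S i j1 = 1)).card with hc1
  have dc0 : ∀ i' i : Fin (n + 1), i' ≤ i → S i j0 = 1 → S i' j0 = 1 :=
    fun i' i h h1 => hint j0 0 i' i (Fin.zero_le _) h hj0 h1
  have dc1 : ∀ i' i : Fin (n + 1), i' ≤ i → S i j1 = 1 → S i' j1 = 1 :=
    fun i' i h h1 => hint j1 0 i' i (Fin.zero_le _) h hj1 h1
  have char0 : ∀ i : Fin (n + 1), S i j0 = 1 ↔ (i : ℕ) < c0 :=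
    aux_char (fun i => S i j0) (fun i => h01 i j0) dc0
  have char1 : ∀ i : Fin (n + 1), S i j1 = 1 ↔ (i : ℕ) < c1 :=
    aux_char (fun i => S i j1) (fun i => h01 i j1) dc1
  have val0 : ∀ i : Fin (n + 1), S i j0 = if (i : ℕ) < c0 then 1 else 0 := by
    intro i
    split_ifs with h
    · exact (char0 i).mpr h
    · rcases h01 i j0 with h' | h'
      · exact h'
      · exact absurd ((char0 i).mp h') h
  have val1 : ∀ i : Fin (n + 1), S i j1 = if (i : ℕ) < c1 then 1 else 0 := by
    intro i
    split_ifs with h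
    · exact (char1 i).mpr h
    · rcases h01 i j1 with h' | h'
      · exact h'
      · exact absurd ((char1 i).mp h') h
  refine ⟨S.updateCol j1 (fun i => S i j1 - S i j0), ?_, ?_, ?_, ?_⟩
  · intro i j
    rw [Matrix.updateCol_apply]
    split_ifs with h
    · rw [val0 i, val1 i]
      split_ifs <;> omega
    · exact h01 i j
  · -- interval property
    have newval : ∀ i : Fin (n + 1),
        S.updateCol j1 (fun i => S i j1 - S i j0) i j1 =
          if c0 ≤ (i : ℕ) ∧ (i : ℕ) < c1 then 1 else 0 := by
      intro i
      rw [Matrix.updateCol_apply, if_pos rfl, val0 i, val1 i]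
      split_ifs <;> omega
    intro j i₁ i₂ i₃ h12 h23 hA hB
    rcases eq_or_ne j j1 with rfl | hjne
    · rw [newval] at hA hB ⊢
      rw [Fin.le_def] at h12 h23
      split_ifs at hA hB ⊢ with hA' hB' hC'
      · rfl
      all_goals omega
    · rw [Matrix.updateCol_apply, if_neg hjne] at hA hB ⊢
      exact hint j i₁ i₂ i₃ h12 h23 hA hB
  · -- determinant
    have := Matrix.det_updateCol_add_smul_self S (Ne.symm hne) (-1 : ℤ)
    rw [← this]
    congr 1
    funext i
    simp [sub_eq_add_neg]
  · -- new filter set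
    ext j
    simp only [Finset.mem_filter, Finset.mem_univ, true_and, Finset.mem_erase]
    rw [Matrix.updateCol_apply]
    split_ifs with h
    · subst h
      rw [hj0, hj1]
      norm_num
    · tauto

theorem aux_main : ∀ n : ℕ, ∀ S : Matrix (Fin n) (Fin n) ℤ,
    (∀ i j, S i j = 0 ∨ S i j = 1) →
    (∀ j, ∀ i₁ i₂ i₃ : Fin n, i₁ ≤ i₂ → i₂ ≤ i₃ →
      S i₁ j = 1 → S i₃ j = 1 → S i₂ j = 1) →
    S.det ∈ ({-1, 0, 1} : Set ℤ) := by
  intro n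
  induction n with
  | zero =>
    intro S _ _
    simp [Matrix.det_fin_zero]
  | succ n ih =>
    suffices H : ∀ k : ℕ, ∀ S : Matrix (Fin (n + 1)) (Fin (n + 1)) ℤ,
        (∀ i j, S i j = 0 ∨ S i j = 1) →
        (∀ j, ∀ i₁ i₂ i₃ : Fin (n + 1), i₁ ≤ i₂ → i₂ ≤ i₃ →
          S i₁ j = 1 → S i₃ j = 1 → S i₂ j = 1) →
        (Finset.univ.filter (fun j => S 0 j = 1)).card = k →
        S.det ∈ ({-1, 0, 1} : Set ℤ) by
      intro S h01 hint
      exact H _ S h01 hint rfl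
    intro k
    induction k with
    | zero =>
      intro S h01 hint hcard
      have hrow : ∀ j, S 0 j = 0 := by
        intro j
        rcases h01 0 j with h | h
        · exact h
        · exfalso
          have : j ∈ Finset.univ.filter (fun j => S 0 j = 1) := by
            simp [h]
          rw [Finset.card_eq_zero] at hcard
          rw [hcard] at this
          exact absurd this (Finset.notMem_empty j)
      rw [Matrix.det_eq_zero_of_row_eq_zero 0 hrow]
      simp
    | succ k ihk =>
      intro S h01 hint hcard
      rcases Nat.eq_zero_or_pos k with hk | hk
      · -- exactly one 1 in row 0: expand
        subst hk
        rw [Finset.card_eq_one] at hcard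
        obtain ⟨j0, hj0⟩ := hcard
        have hS0j0 : S 0 j0 = 1 := by
          have : j0 ∈ Finset.univ.filter (fun j => S 0 j = 1) := by
            rw [hj0]; exact Finset.mem_singleton_self j0
          simpa using this
        have hzero : ∀ j, j ≠ j0 → S 0 j = 0 := by
          intro j hne
          rcases h01 0 j with h | h
          · exact h
          · exfalso
            have : j ∈ Finset.univ.filter (fun j => S 0 j = 1) := by simp [h]
            rw [hj0, Finset.mem_singleton] at this
            exact hne this
        rw [Matrix.det_succ_row_zero]
        rw [Finset.sum_eq_single j0 (by
          intro j _ hne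
          rw [hzero j hne]
          ring) (by intro h; exact absurd (Finset.mem_univ j0) h)]
        rw [hS0j0]
        have hminor : (S.submatrix Fin.succ j0.succAbove).det ∈ ({-1, 0, 1} : Set ℤ) := by
          apply ih
          · intro i j
            exact h01 i.succ (j0.succAbove j)
          · intro j i₁ i₂ i₃ h12 h23 hA hB
            exact hint (j0.succAbove j) i₁.succ i₂.succ i₃.succ
              (Fin.succ_le_succ_iff.mpr h12) (Fin.succ_le_succ_iff.mpr h23) hA hB
        rcases neg_one_pow_eq_or ℤ (j0 : ℕ) with hp | hp <;> rw [hp] <;>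
          simp only [Set.mem_insert_iff, Set.mem_singleton_iff] at hminor ⊢ <;>
          rcases hminor with h | h | h <;> rw [h] <;> norm_num
      · -- at least two 1's in row 0: subtract columns
        have h2 : 1 < (Finset.univ.filter (fun j => S 0 j = 1)).card := by omega
        obtain ⟨a, ha, b, hb, hab⟩ := Finset.one_lt_card.mp h2
        simp only [Finset.mem_filter, Finset.mem_univ, true_and] at ha hb
        rcases le_total ((Finset.univ.filter (fun i => S i a = 1)).card)
            ((Finset.univ.filter (fun i => S i b = 1)).card) with hle | hle
        · obtain ⟨S', h01', hint', hdet, hJ⟩ := aux_step S h01 hint a b hab ha hb hle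
          rw [← hdet]
          apply ihk S' h01' hint'
          rw [hJ, Finset.card_erase_of_mem (by simp [hb]), hcard]
          omega
        · obtain ⟨S', h01', hint', hdet, hJ⟩ := aux_step S h01 hint b a (Ne.symm hab) hb ha hle
          rw [← hdet]
          apply ihk S' h01' hint'
          rw [hJ, Finset.card_erase_of_mem (by simp [ha]), hcard]
          omega

theorem stmt0 (n : ℕ) (S : Matrix (Fin n) (Fin n) ℤ)
    (h01 : ∀ i j, S i j = 0 ∨ S i j = 1)
    (hint : ∀ j, ∀ i₁ i₂ i₃ : Fin n, i₁ ≤ i₂ → i₂ ≤ i₃ →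
      S i₁ j = 1 → S i₃ j = 1 → S i₂ j = 1) :
    S.det ∈ ({-1, 0, 1} : Set ℤ) :=
  aux_main n S h01 hint
end

section
/- Let K, n be positive integers, and for k = 1,…,K let M_k be an n×m_k complex matrix. Set A_k := M_k M_k*. Then for scalars x_1,…,x_K, det(x_1 A_1 + ⋯ + x_K A_K) = Σ_{n_1+⋯+n_K = n} γ(n_1,…,n_K) x_1^{n_1} ⋯ x_K^{n_K}, where γ(n_1,…,n_K) = Σ |det(S_1 | ⋯ | S_K)|², the sum ranging over all ordered K-tuples (S_1,…,S_K) where S_k is an n×n_k submatrix formed from a choice of n_k distinct columns of M_k. -/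
/-!
With `C = (M_1 | ⋯ | M_K)` and `D` the diagonal matrix carrying `x k` on the columns of block
`k`, the matrix is `C D Cᴴ`. Cauchy–Binet expands its determinant over the `n`-element sets `S`
of columns as `∑ S, (∏ t ∈ S, D t) |det C[:, S]|²`; such a set is exactly a tuple
`(S_1, …, S_K)`, and `|det C[:, S]|` does not depend on the order in which `S` is enumerated.
Cauchy–Binet itself: expanding `det (A B)` multilinearly over all column choices `p` of `A`,
non-injective `p` give vanishing determinants, and the `p` with image `S` are a fixed
enumeration of `S` composed with the permutations.
-/

open Matrix Finset Function

theorem Finset.sum_filter_image_eq_sum_perm {ι J M : Type*} [Fintype ι] [DecidableEq ι]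
    [Fintype J] [DecidableEq J] [AddCommMonoid M] {S : Finset J} (e : ι ≃ S)
    (f : (ι → J) → M) :
    ∑ p with univ.image p = S, f p = ∑ σ : Equiv.Perm ι, f fun i => e (σ i) := by
  have hmem {p : ι → J} (hp : univ.image p = S) (i : ι) : p i ∈ S :=
    hp ▸ mem_image_of_mem p (mem_univ i)
  have hbij {p : ι → J} (hp : univ.image p = S) :
      Bijective fun i => e.symm ⟨p i, hmem hp i⟩ := by
    refine Finite.surjective_iff_bijective.1 fun a => ?_
    have ha : (e a : J) ∈ univ.image p := hp ▸ (e a).2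
    obtain ⟨i, -, hi⟩ := mem_image.1 ha
    exact ⟨i, by simp [hi]⟩
  symm
  refine sum_bij' (fun σ _ i => e (σ i))
    (fun p hp => Equiv.ofBijective _ (hbij (mem_filter.1 hp).2))
    (fun σ _ => ?_) (fun _ _ => mem_univ _) (fun σ _ => ?_) (fun p _ => ?_) (fun _ _ => rfl)
  · refine mem_filter.2 ⟨mem_univ _, Finset.ext fun t => ⟨fun ht => ?_, fun ht => ?_⟩⟩
    · obtain ⟨i, -, rfl⟩ := mem_image.1 ht
      exact (e (σ i)).2
    · exact mem_image.2 ⟨σ.symm (e.symm ⟨t, ht⟩), mem_univ _, by simp⟩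
  · ext i; simp
  · funext i; simp

@[simps]
noncomputable def Finset.piEquivFinsetSigma {K : Type*} [Fintype K] (κ : K → Type*) :
    (∀ k, Finset (κ k)) ≃ Finset (Σ k, κ k) where
  toFun s := univ.sigma s
  invFun S k := S.preimage (Sigma.mk k) sigma_mk_injective.injOn
  left_inv s := by ext; simp
  right_inv S := by ext; simp

namespace Matrix

section CauchyBinet

variable {ι J R : Type*} [Fintype ι] [DecidableEq ι] [CommRing R]

theorem det_mul_eq_sum_prod_mul_det_submatrix [Fintype J] (A : Matrix ι J R)
    (B : Matrix J ι R) :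
    (A * B).det = ∑ p : ι → J, (∏ i, B (p i) i) * (A.submatrix id p).det := by
  simp only [det_apply', mul_apply, Fintype.prod_sum, mul_sum, submatrix_apply, id_eq]
  rw [sum_comm]
  refine sum_congr rfl fun p _ => sum_congr rfl fun σ _ => ?_
  rw [prod_mul_distrib]
  ring

theorem det_submatrix_eq_zero_of_not_injective (A : Matrix ι J R) {p : ι → J}
    (hp : ¬Injective p) : (A.submatrix id p).det = 0 := by
  obtain ⟨i, j, hij, hne⟩ := not_injective_iff.1 hp
  exact det_zero_of_column_eq hne fun k => by simp [hij]

theorem sum_perm_prod_mul_det_submatrix_comp (A : Matrix ι J R) (B : Matrix J ι R)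
    (v : ι → J) :
    ∑ σ : Equiv.Perm ι, (∏ i, B (v (σ i)) i) * (A.submatrix id (v ∘ σ)).det =
      (A.submatrix id v).det * (B.submatrix v id).det := by
  have hperm (σ : Equiv.Perm ι) :
      (A.submatrix id (v ∘ σ)).det = Equiv.Perm.sign σ * (A.submatrix id v).det :=
    det_permute' σ (A.submatrix id v)
  simp only [hperm, det_apply' (B.submatrix v id), submatrix_apply, id_eq, mul_sum]
  exact sum_congr rfl fun σ _ => by ring

theorem det_mul_eq_sum_det_submatrix_mul_det_submatrix [Fintype J] [DecidableEq J]
    (A : Matrix ι J R) (B : Matrix J ι R)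
    (e : ∀ S : Finset J, S.card = Fintype.card ι → ι ≃ S) :
    (A * B).det = ∑ S : Finset J, if h : S.card = Fintype.card ι then
      (A.submatrix id fun i => e S h i).det * (B.submatrix (fun i => e S h i) id).det
      else 0 := by
  rw [det_mul_eq_sum_prod_mul_det_submatrix, ← sum_fiberwise univ fun p => univ.image p]
  refine sum_congr rfl fun S _ => ?_
  split_ifs with h
  · rw [sum_filter_image_eq_sum_perm (e S h)]
    exact sum_perm_prod_mul_det_submatrix_comp A B fun i => e S h i
  · refine sum_eq_zero fun p hp => ?_
    rw [det_submatrix_eq_zero_of_not_injective A fun hinj => h ?_, mul_zero]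
    rw [← (mem_filter.1 hp).2, card_image_of_injective _ hinj, card_univ]

theorem det_mul_diagonal_mul_conjTranspose [StarRing R] [Fintype J] [DecidableEq J]
    (A : Matrix ι J R) (d : J → R) (e : ∀ S : Finset J, S.card = Fintype.card ι → ι ≃ S) :
    (A * diagonal d * Aᴴ).det = ∑ S : Finset J, if h : S.card = Fintype.card ι then
      (∏ t ∈ S, d t) *
        ((A.submatrix id fun i => e S h i).det * star (A.submatrix id fun i => e S h i).det)
      else 0 := by
  rw [det_mul_eq_sum_det_submatrix_mul_det_submatrix _ _ e]
  refine sum_congr rfl fun S _ => dite_congr rfl (fun h => ?_) fun _ => rfl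
  set v : ι → J := fun i => e S h i
  have hprod : ∏ i, (d ∘ v) i = ∏ t ∈ S, d t :=
    (Equiv.prod_comp (e S h) fun t => d t).trans (prod_coe_sort S d)
  have hcols : (A * diagonal d).submatrix id v = A.submatrix id v * diagonal (d ∘ v) := by
    ext; simp [mul_diagonal]
  rw [← conjTranspose_submatrix, det_conjTranspose, hcols, det_mul, det_diagonal, ← hprod]
  ring

end CauchyBinet

section Norm

variable {ι J 𝕜 : Type*} [Fintype ι] [DecidableEq ι] [SeminormedCommRing 𝕜]

theorem norm_det_submatrix_eq_of_range_eq (A : Matrix ι J 𝕜) {u v : ι → J}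
    (hu : Injective u) (hv : Injective v) (huv : Set.range u = Set.range v) :
    ‖(A.submatrix id u).det‖ = ‖(A.submatrix id v).det‖ := by
  let σ : Equiv.Perm ι :=
    (Equiv.ofInjective u hu).trans ((Equiv.setCongr huv).trans (Equiv.ofInjective v hv).symm)
  have hσ : u = v ∘ σ := funext fun i => by simp [σ, Equiv.apply_ofInjective_symm]
  rw [hσ, show A.submatrix id (v ∘ σ) = (A.submatrix id v).submatrix id σ from rfl,
    det_permute']
  rcases Int.units_eq_one_or (Equiv.Perm.sign σ) with hs | hs <;> simp [hs]

theorem norm_det_submatrix_finsetSigma_eq {K : Type*} [Fintype K] {κ : K → Type*}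
    (A : Matrix ι (Σ k, κ k) 𝕜) (s : ∀ k, Finset (κ k)) (e : ι ≃ univ.sigma s)
    (φ : ι ≃ Σ k, s k) :
    ‖(A.submatrix id fun i => e i).det‖ = ‖(A.submatrix id fun i => ⟨(φ i).1, (φ i).2⟩).det‖ := by
  refine norm_det_submatrix_eq_of_range_eq A (Subtype.val_injective.comp e.injective)
    ((injective_id.sigma_map fun _ => Subtype.val_injective).comp φ.injective) ?_
  change Set.range (Subtype.val ∘ e) = Set.range (Sigma.map id (fun _ => Subtype.val) ∘ φ)
  rw [e.surjective.range_comp, φ.surjective.range_comp, Subtype.range_val]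
  ext ⟨k, j⟩
  simp [Sigma.map]

end Norm

def fromSigmaCols {ι R K : Type*} {κ : K → Type*} (M : ∀ k, Matrix ι (κ k) R) :
    Matrix ι (Σ k, κ k) R :=
  of fun i t => M t.1 i t.2

theorem fromSigmaCols_mul_conjTranspose {ι R K : Type*} {κ : K → Type*} [Semiring R]
    [StarRing R] [Fintype K] [∀ k, Fintype (κ k)] (M N : ∀ k, Matrix ι (κ k) R) :
    fromSigmaCols M * (fromSigmaCols N)ᴴ = ∑ k, M k * (N k)ᴴ := by
  ext i j
  simp [fromSigmaCols, sum_apply, mul_apply, Fintype.sum_sigma]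

theorem fromSigmaCols_smul {ι R K : Type*} {κ : K → Type*} [CommSemiring R] [Fintype K]
    [DecidableEq K] [∀ k, Fintype (κ k)] [∀ k, DecidableEq (κ k)] (M : ∀ k, Matrix ι (κ k) R)
    (x : K → R) :
    fromSigmaCols (fun k => x k • M k) =
      fromSigmaCols M * diagonal fun t : Σ k, κ k => x t.1 := by
  ext i t
  simp [fromSigmaCols, mul_comm]

end Matrix

theorem stmt3_general (K n : ℕ) (m : Fin K → ℕ)
    (M : ∀ k : Fin K, Matrix (Fin n) (Fin (m k)) ℂ) (x : Fin K → ℂ) :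
    (∑ k, x k • (M k * (M k)ᴴ)).det =
      ∑ s ∈ Finset.univ.filter
        (fun s : ∀ k : Fin K, Finset (Fin (m k)) => ∑ k, (s k).card = n),
        (if h : Fintype.card ((k : Fin K) × {j // j ∈ s k}) = n then
          ((‖
            (Matrix.det (Matrix.of fun i j =>
              M (((Fintype.equivFinOfCardEq h).symm j).1) i
                (((Fintype.equivFinOfCardEq h).symm j).2.1)))‖) ^ 2 : ℂ)
         else 0) * ∏ k, x k ^ (s k).card := by
  let e (S : Finset ((k : Fin K) × Fin (m k))) (h : S.card = Fintype.card (Fin n)) :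
      Fin n ≃ S :=
    Fintype.equivOfCardEq (by simp [h])
  have hsmul : ∑ k, x k • (M k * (M k)ᴴ) = ∑ k, (x k • M k) * (M k)ᴴ :=
    sum_congr rfl fun k _ => (smul_mul _ _ _).symm
  rw [hsmul, ← fromSigmaCols_mul_conjTranspose, fromSigmaCols_smul,
    det_mul_diagonal_mul_conjTranspose _ _ e, ← (piEquivFinsetSigma _).sum_comp, sum_filter]
  refine sum_congr rfl fun s _ => ?_
  have hS : (univ.sigma s).card = ∑ k, (s k).card := card_sigma _ _
  by_cases hs : ∑ k, (s k).card = n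
  swap
  · rw [piEquivFinsetSigma_apply, dif_neg (by simpa [hS] using hs), if_neg hs]
  have h : (univ.sigma s).card = Fintype.card (Fin n) := by rw [hS, hs, Fintype.card_fin]
  have hcard : Fintype.card ((k : Fin K) × {j // j ∈ s k}) = n := by simpa using hs
  have hx : ∏ t ∈ univ.sigma s, x t.1 = ∏ k, x k ^ (s k).card := by simp [prod_sigma]
  rw [piEquivFinsetSigma_apply, dif_pos h, if_pos hs, dif_pos hcard, hx, RCLike.star_def,
    RCLike.mul_conj, norm_det_submatrix_finsetSigma_eq _ s _ (Fintype.equivFinOfCardEq hcard).symm,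
    mul_comm]
  rfl

/-- Binet–Cauchy / polarized determinant expansion:
`det (∑ k, x k • M k * (M k)ᴴ)` is the sum, over all tuples `s` of sets of
columns (one set of columns `s k` chosen from each `M k`) whose cardinalities
add up to `n`, of `|det (S₁ | ⋯ | S_K)|² · ∏ x k ^ (s k).card`. -/
theorem stmt3 (K n : ℕ) (hK : 0 < K) (hn : 0 < n) (m : Fin K → ℕ)
    (M : ∀ k : Fin K, Matrix (Fin n) (Fin (m k)) ℂ) (x : Fin K → ℂ) :
    (∑ k, x k • (M k * (M k)ᴴ)).det =
      ∑ s ∈ Finset.univ.filter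
        (fun s : ∀ k : Fin K, Finset (Fin (m k)) => ∑ k, (s k).card = n),
        (if h : Fintype.card ((k : Fin K) × {j // j ∈ s k}) = n then
          ((‖
            (Matrix.det (Matrix.of fun i j =>
              M (((Fintype.equivFinOfCardEq h).symm j).1) i
                (((Fintype.equivFinOfCardEq h).symm j).2.1)))‖) ^ 2 : ℂ)
         else 0) * ∏ k, x k ^ (s k).card :=
  stmt3_general K n m M x
end

section
/- Let M_k (k=1,…,K) be n×m_k matrices with entries in {0,1} such that in each column of each M_k the 1's occur in consecutive row positions, and let M_k' be n×m_k integer matrices with M_k' ≡ M_k (mod 2) entrywise. Set A_k := M_k M_k^T and A_k' := M_k' (M_k')^T. Then for all nonnegative reals t_1,…,t_K: det(t_1 A_1 + ⋯ + t_K A_K) ≤ det(t_1 A_1' + ⋯ + t_K A_K'). -/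
/-!
Concatenating the columns of all `M k` into one matrix `Y` gives `∑ k, t k • A k = Y * D * Yᵀ`
with `D` diagonal and nonnegative. The Cauchy–Binet formula, in the form
`n! * det (A * B) = ∑ f, det A_{·f} * det B_{f·}` summed over all maps `f : Fin n → columns`,
writes `n!` times each side as `∑ f, (∏ i, D (f i)) * det (Y_{·f}) ^ 2`. For `M`, every `Y_{·f}`
is a square column-interval (0,1)-matrix, so its determinant lies in `{-1, 0, 1}`: if two columns
have a one in the top row they are nested, and subtracting the shorter from the longer keeps the
interval property while removing a one from that row; once the top row holds a single one, expand
along it. For `M'` the square blocks are congruent mod 2, hence so are the determinants, and an odd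
integer has absolute value at least `1`.
-/

open Matrix Finset

namespace Matrix

variable {l m n o R : Type*}

structure IsColumnInterval [LE m] (X : Matrix m n ℤ) : Prop where
  zero_or_one : ∀ i j, X i j = 0 ∨ X i j = 1
  one_of_le_of_le : ∀ j, ∀ i₁ i₂ i₃ : m, i₁ ≤ i₂ → i₂ ≤ i₃ → X i₁ j = 1 → X i₃ j = 1 → X i₂ j = 1

namespace IsColumnInterval

lemma submatrix [Preorder m] [Preorder l] {X : Matrix m n ℤ} (hX : X.IsColumnInterval)
    {f : l → m} (hf : Monotone f) (g : o → n) : (X.submatrix f g).IsColumnInterval where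
  zero_or_one i j := hX.zero_or_one (f i) (g j)
  one_of_le_of_le j _ _ _ h₁₂ h₂₃ := hX.one_of_le_of_le (g j) _ _ _ (hf h₁₂) (hf h₂₃)

variable [LinearOrder m] {X : Matrix m n ℤ} {i₀ : m} {a b : n}

lemma col_subset_or_subset (hX : X.IsColumnInterval) (h₀ : IsBot i₀)
    (ha : X i₀ a = 1) (hb : X i₀ b = 1) :
    (∀ i, X i a = 1 → X i b = 1) ∨ (∀ i, X i b = 1 → X i a = 1) := by
  by_contra! ⟨⟨i, hia, hib⟩, ⟨i', hi'b, hi'a⟩⟩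
  rcases le_total i i' with h | h
  · exact hib (hX.one_of_le_of_le b i₀ i i' (h₀ i) h hb hi'b)
  · exact hi'a (hX.one_of_le_of_le a i₀ i' i (h₀ i') h ha hia)

lemma updateCol_sub [DecidableEq n] (hX : X.IsColumnInterval) (h₀ : IsBot i₀)
    (ha : X i₀ a = 1) (hab : ∀ i, X i a = 1 → X i b = 1) :
    (X.updateCol b fun i => X i b - X i a).IsColumnInterval := by
  have hone : ∀ i, X i b - X i a = 1 ↔ X i b = 1 ∧ X i a = 0 := by
    intro i
    rcases hX.zero_or_one i a with h | h
    · simp [h]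
    · simp [h, hab i h]
  constructor
  · intro i j
    rw [updateCol_apply]
    split_ifs
    · rcases hX.zero_or_one i a with h | h
      · simpa [h] using hX.zero_or_one i b
      · simp [h, hab i h]
    · exact hX.zero_or_one i j
  · intro j i₁ i₂ i₃ h₁₂ h₂₃
    simp only [updateCol_apply]
    split_ifs
    · simp only [hone]
      rintro ⟨h₁b, h₁a⟩ ⟨h₃b, -⟩
      refine ⟨hX.one_of_le_of_le b i₁ i₂ i₃ h₁₂ h₂₃ h₁b h₃b, ?_⟩
      rcases hX.zero_or_one i₂ a with h | h
      · exact h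
      · simp [hX.one_of_le_of_le a i₀ i₁ i₂ (h₀ i₁) h₁₂ ha h] at h₁a
    · exact hX.one_of_le_of_le j i₁ i₂ i₃ h₁₂ h₂₃

end IsColumnInterval

lemma det_eq_of_row_zero_eq_single [CommRing R] {r : ℕ}
    (A : Matrix (Fin (r + 1)) (Fin (r + 1)) R) {j₀ : Fin (r + 1)} (hrow : ∀ j ≠ j₀, A 0 j = 0) :
    A.det = (-1) ^ (j₀ : ℕ) * A 0 j₀ * (A.submatrix Fin.succ j₀.succAbove).det := by
  rw [det_succ_row_zero, Finset.sum_eq_single j₀ (fun j _ hj => by simp [hrow j hj]) (by simp)]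

namespace IsColumnInterval

lemma exists_det_eq_and_card_row_lt [Fintype n] [DecidableEq n] [LinearOrder n] {X : Matrix n n ℤ}
    {i₀ a b : n} (hX : X.IsColumnInterval) (h₀ : IsBot i₀) (hab : a ≠ b)
    (ha : X i₀ a = 1) (hb : X i₀ b = 1) :
    ∃ X' : Matrix n n ℤ, X'.IsColumnInterval ∧ X'.det = X.det ∧
      #{j | X' i₀ j = 1} < #{j | X i₀ j = 1} := by
  wlog hsub : ∀ i, X i a = 1 → X i b = 1 generalizing a b
  · exact this hab.symm hb ha ((hX.col_subset_or_subset h₀ ha hb).resolve_left hsub)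
  refine ⟨X.updateCol b fun i => X i b - X i a, hX.updateCol_sub h₀ ha hsub, ?_, ?_⟩
  · simpa [neg_one_smul, ← sub_eq_add_neg] using det_updateCol_add_smul_self X hab.symm (-1)
  · have hrow : ({j | (X.updateCol b fun i => X i b - X i a) i₀ j = 1} : Finset n)
        = ({j | X i₀ j = 1} : Finset n).erase b := by
      ext j
      by_cases hj : j = b <;> simp [updateCol_apply, hj, ha, hb]
    rw [hrow]
    exact card_erase_lt_of_mem (by simpa using hb)

lemma abs_det_le_one_succ {r : ℕ}
    (ih : ∀ Y : Matrix (Fin r) (Fin r) ℤ, Y.IsColumnInterval → |Y.det| ≤ 1)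
    (X : Matrix (Fin (r + 1)) (Fin (r + 1)) ℤ) (hX : X.IsColumnInterval) : |X.det| ≤ 1 := by
  induction hc : #{j | X 0 j = 1} using Nat.strong_induction_on generalizing X with
  | _ c ihc =>
  by_cases htwo : ∃ a b, a ≠ b ∧ X 0 a = 1 ∧ X 0 b = 1
  · obtain ⟨a, b, hab, ha, hb⟩ := htwo
    obtain ⟨X', hX', hdet, hlt⟩ := hX.exists_det_eq_and_card_row_lt Fin.zero_le hab ha hb
    exact hdet ▸ ihc _ (hc ▸ hlt) X' hX' rfl
  push Not at htwo
  by_cases hone : ∃ j₀, X 0 j₀ = 1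
  · obtain ⟨j₀, hj₀⟩ := hone
    have hrow : ∀ j ≠ j₀, X 0 j = 0 := fun j hj =>
      (hX.zero_or_one 0 j).resolve_right fun h => htwo j j₀ hj h hj₀
    rw [det_eq_of_row_zero_eq_single X hrow, hj₀, abs_mul, abs_mul]
    simpa using ih _ (hX.submatrix Fin.strictMono_succ.monotone _)
  · push Not at hone
    rw [det_eq_zero_of_row_eq_zero 0 fun j => (hX.zero_or_one 0 j).resolve_right (hone j)]
    simp

theorem abs_det_le_one {r : ℕ} {X : Matrix (Fin r) (Fin r) ℤ} (hX : X.IsColumnInterval) :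
    |X.det| ≤ 1 := by
  induction r with
  | zero => simp
  | succ r ih => exact abs_det_le_one_succ (fun Y hY => ih hY) X hX

end IsColumnInterval

lemma det_modEq [Fintype n] [DecidableEq n] {q : ℕ} {X X' : Matrix n n ℤ}
    (h : ∀ i j, X' i j ≡ X i j [ZMOD q]) : X'.det ≡ X.det [ZMOD q] := by
  have hmap : X'.map ((↑) : ℤ → ZMod q) = X.map (↑) := by
    ext i j
    exact (ZMod.intCast_eq_intCast_iff _ _ _).mpr (h i j)
  rw [← ZMod.intCast_eq_intCast_iff, Int.cast_det, Int.cast_det, hmap]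

lemma IsColumnInterval.abs_det_le_abs_det_of_modEq_two {r : ℕ} {X X' : Matrix (Fin r) (Fin r) ℤ}
    (hX : X.IsColumnInterval) (h : ∀ i j, X' i j ≡ X i j [ZMOD 2]) : |X.det| ≤ |X'.det| := by
  have hle := abs_le.mp hX.abs_det_le_one
  have hmod : X'.det % 2 = X.det % 2 := det_modEq h
  simp only [abs_eq_max_neg]
  omega

section CauchyBinet

variable [Fintype n] [DecidableEq n] [Fintype l] [CommRing R]

lemma det_mul_eq_sum_prod_mul_det (A : Matrix n l R) (B : Matrix l n R) :
    (A * B).det = ∑ f : n → l, (∏ i, A i (f i)) * (B.submatrix f id).det := by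
  have hrows : (A * B).det = detRowAlternating.toMultilinearMap fun i => ∑ p, A i p • B p := by
    congr
    ext i j
    simp [mul_apply]
  rw [hrows, MultilinearMap.map_sum]
  refine sum_congr rfl fun f _ => ?_
  rw [MultilinearMap.map_smul_univ, smul_eq_mul]
  rfl

lemma factorial_mul_det_mul (A : Matrix n l R) (B : Matrix l n R) :
    (Fintype.card n).factorial * (A * B).det
      = ∑ f : n → l, (A.submatrix id f).det * (B.submatrix f id).det := by
  have hperm : ∀ σ : Equiv.Perm n, (A * B).det
      = ∑ f : n → l, (Equiv.Perm.sign σ * ∏ i, A (σ i) (f i)) * (B.submatrix f id).det := by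
    intro σ
    have hσ : ((A.submatrix σ id) * B).det = Equiv.Perm.sign σ * (A * B).det :=
      det_permute σ (A * B)
    have hsign : ((Equiv.Perm.sign σ : ℤ) : R) * Equiv.Perm.sign σ = 1 := by
      rw [← Int.cast_mul, ← Units.val_mul, Int.units_mul_self, Units.val_one, Int.cast_one]
    calc (A * B).det = Equiv.Perm.sign σ * ((A.submatrix σ id) * B).det := by
          rw [hσ, ← mul_assoc, hsign, one_mul]
      _ = _ := by
          rw [det_mul_eq_sum_prod_mul_det, mul_sum]
          simp only [submatrix_apply, id, mul_assoc]
  calc ((Fintype.card n).factorial : R) * (A * B).det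
      = ∑ σ : Equiv.Perm n, (A * B).det := by simp [Fintype.card_perm]
    _ = ∑ f : n → l, (A.submatrix id f).det * (B.submatrix f id).det := by
      simp only [sum_congr rfl fun σ _ => hperm σ]
      rw [sum_comm]
      simp only [← sum_mul, det_apply', submatrix_apply, id]

lemma factorial_mul_det_mul_diagonal_mul_transpose [DecidableEq l] (Y : Matrix n l R) (d : l → R) :
    (Fintype.card n).factorial * (Y * diagonal d * Yᵀ).det
      = ∑ f : n → l, (∏ i, d (f i)) * (Y.submatrix id f).det ^ 2 := by
  rw [factorial_mul_det_mul]
  refine sum_congr rfl fun f _ => ?_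
  have hcols : (Y * diagonal d).submatrix id f = Y.submatrix id f * diagonal (d ∘ f) := by
    ext i j
    simp
  rw [hcols, det_mul, det_diagonal, ← transpose_submatrix, det_transpose]
  simp only [Function.comp_apply]
  ring

end CauchyBinet

def sigmaCols {ι : Type*} {m : ι → Type*} {α : Type*} (N : ∀ k, Matrix n (m k) α) :
    Matrix n (Σ k, m k) α :=
  of fun i p => N p.1 i p.2

lemma sum_smul_mul_transpose_eq_sigmaCols {ι : Type*} [Fintype ι] [DecidableEq ι] {m : ι → Type*}
    [∀ k, Fintype (m k)] [∀ k, DecidableEq (m k)] [CommSemiring R] (t : ι → R)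
    (N : ∀ k, Matrix n (m k) R) :
    ∑ k, t k • (N k * (N k)ᵀ)
      = sigmaCols N * diagonal (fun p : Σ k, m k => t p.1) * (sigmaCols N)ᵀ := by
  ext i j
  rw [mul_apply, Fintype.sum_sigma]
  simp only [mul_diagonal]
  simp only [sum_apply, smul_apply, mul_apply, transpose_apply, sigmaCols, of_apply,
    smul_eq_mul, mul_sum]
  exact sum_congr rfl fun k _ => sum_congr rfl fun c _ => by ring

end Matrix

theorem stmt4_general (K n : ℕ) (m : Fin K → ℕ)
    (M M' : ∀ k : Fin K, Matrix (Fin n) (Fin (m k)) ℤ)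
    (h01 : ∀ k i j, M k i j = 0 ∨ M k i j = 1)
    (hint : ∀ k j, ∀ i₁ i₂ i₃ : Fin n, i₁ ≤ i₂ → i₂ ≤ i₃ →
      M k i₁ j = 1 → M k i₃ j = 1 → M k i₂ j = 1)
    (hmod : ∀ k i j, M' k i j ≡ M k i j [ZMOD 2])
    (t : Fin K → ℝ) (ht : ∀ k, 0 ≤ t k) :
    (∑ k, t k • ((M k * (M k)ᵀ).map ((↑) : ℤ → ℝ))).det ≤
      (∑ k, t k • ((M' k * (M' k)ᵀ).map ((↑) : ℤ → ℝ))).det := by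
  have hgram : ∀ N : ∀ k, Matrix (Fin n) (Fin (m k)) ℤ,
      ∑ k, t k • ((N k * (N k)ᵀ).map ((↑) : ℤ → ℝ))
        = (sigmaCols N).map ((↑) : ℤ → ℝ) * diagonal (fun p : Σ k, Fin (m k) => t p.1) *
          ((sigmaCols N).map ((↑) : ℤ → ℝ))ᵀ := by
    intro N
    simp only [← Int.coe_castRingHom, Matrix.map_mul, ← transpose_map]
    exact sum_smul_mul_transpose_eq_sigmaCols t _
  have hX : (sigmaCols M).IsColumnInterval := ⟨fun i p => h01 p.1 i p.2, fun p => hint p.1 p.2⟩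
  have hfac : (0 : ℝ) < (Fintype.card (Fin n)).factorial := by positivity
  rw [hgram, hgram, ← mul_le_mul_iff_right₀ hfac, factorial_mul_det_mul_diagonal_mul_transpose,
    factorial_mul_det_mul_diagonal_mul_transpose]
  refine sum_le_sum fun f _ => mul_le_mul_of_nonneg_left ?_ (prod_nonneg fun j _ => ht _)
  rw [sq_le_sq, submatrix_map, submatrix_map, ← Int.cast_det, ← Int.cast_det]
  exact_mod_cast (hX.submatrix monotone_id f).abs_det_le_abs_det_of_modEq_two
    fun i j => hmod (f j).1 i (f j).2

theorem stmt4 (K n : ℕ) (hK : 0 < K) (hn : 0 < n) (m : Fin K → ℕ)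
    (M M' : ∀ k : Fin K, Matrix (Fin n) (Fin (m k)) ℤ)
    (h01 : ∀ k i j, M k i j = 0 ∨ M k i j = 1)
    (hint : ∀ k j, ∀ i₁ i₂ i₃ : Fin n, i₁ ≤ i₂ → i₂ ≤ i₃ →
      M k i₁ j = 1 → M k i₃ j = 1 → M k i₂ j = 1)
    (hmod : ∀ k i j, M' k i j ≡ M k i j [ZMOD 2])
    (t : Fin K → ℝ) (ht : ∀ k, 0 ≤ t k) :
    (∑ k, t k • ((M k * (M k)ᵀ).map ((↑) : ℤ → ℝ))).det ≤
      (∑ k, t k • ((M' k * (M' k)ᵀ).map ((↑) : ℤ → ℝ))).det :=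
  stmt4_general K n m M M' h01 hint hmod t ht
end

section
/- Let K, n be positive integers; for k=1,…,K let M_k be n×m_k column-interval (0,1)-matrices and M_k' matrices with entries in {-1,0,1} such that M_k' ≡ M_k (mod 2) entrywise. Set A_k = M_k M_k^T, A_k' = M_k'(M_k')^T. Then for all t_k ≥ 0 and 1 ≤ p ≤ 2: ||Σ_k t_k A_k||_p ≥ ||Σ_k t_k A_k'||_p, where ||A||_p is the ℓ_p norm of the eigenvalue sequence. -/
/-!
Both `∑ t_k A_k` and `∑ t_k A'_k` are positive semidefinite with the same trace, since
`|M'_k| = M_k` entrywise. Shifting by `s ≥ 0`, write `sI + ∑ t_k M_k M_kᵀ = N D Nᵀ`, where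
`N` lists all columns of all `M_k` followed by the identity, and `D ≥ 0` is diagonal. By
Cauchy–Binet, `det (N D Nᵀ)` is a nonnegative combination of the squares `det (N_S)²` of the
maximal minors. The columns of `N` are intervals of ones, so `N` is totally unimodular and
`det N_S ∈ {-1, 0, 1}`; since `N' ≡ N (mod 2)`, `det N'_S ≡ det N_S` is odd whenever
`det N_S ≠ 0`, whence `det (N_S)² ≤ det (N'_S)²` and `det (sI + A) ≤ det (sI + A')`.

For `1 < p < 2`, `x ^ p` is a positive multiple of `∫₀^∞ s^(p-2) (x - s log (1 + x/s)) ds`,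
and for eigenvalues `λ` the integrand summed over `λ` is
`s^(p-2) (tr A - s log (det (sI + A) / sⁿ))`: equal traces and the determinant inequality give
`∑ λ'^p ≤ ∑ λ^p`. The endpoints `p = 1, 2` follow by continuity in `p`.
-/

open Matrix

structure IsIncidenceVector {ι : Type*} (z : ι → ℤ) : Prop where
  abs_le_one : ∀ i, |z i| ≤ 1
  eq_of_eq_one : ∀ {i j}, z i = 1 → z j = 1 → i = j
  eq_of_eq_neg_one : ∀ {i j}, z i = -1 → z j = -1 → i = j

namespace IsIncidenceVector

variable {ι : Type*} {z : ι → ℤ}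

lemma comp {κ : Type*} (hz : IsIncidenceVector z) {f : κ → ι} (hf : f.Injective) :
    IsIncidenceVector (z ∘ f) :=
  ⟨fun i => hz.abs_le_one (f i), fun hi hj => hf (hz.eq_of_eq_one hi hj),
    fun hi hj => hf (hz.eq_of_eq_neg_one hi hj)⟩

lemma eq_one_or_eq_neg_one (hz : IsIncidenceVector z) {i : ι} (hi : z i ≠ 0) :
    z i = 1 ∨ z i = -1 := by
  have := abs_le.mp (hz.abs_le_one i)
  omega

/-- Two distinct nonzero entries must be a `1` and a `-1`, and they are the only ones. -/
lemma sum_eq_zero [Fintype ι] (hz : IsIncidenceVector z) {i j : ι} (hij : i ≠ j)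
    (hi : z i ≠ 0) (hj : z j ≠ 0) : ∑ k, z k = 0 := by
  have hi' := hz.eq_one_or_eq_neg_one hi
  have hj' := hz.eq_one_or_eq_neg_one hj
  have hpair : z i + z j = 0 := by
    rcases hi' with hi' | hi' <;> rcases hj' with hj' | hj'
    · exact absurd (hz.eq_of_eq_one hi' hj') hij
    · omega
    · omega
    · exact absurd (hz.eq_of_eq_neg_one hi' hj') hij
  rw [Fintype.sum_eq_add i j hij fun k ⟨hki, hkj⟩ => ?_, hpair]
  by_contra hk
  rcases hz.eq_one_or_eq_neg_one hk with hk' | hk' <;> rcases hi' with hi' | hi'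
  · exact hki (hz.eq_of_eq_one hk' hi')
  · exact hkj (hz.eq_of_eq_one hk' (by omega))
  · exact hkj (hz.eq_of_eq_neg_one hk' (by omega))
  · exact hki (hz.eq_of_eq_neg_one hk' hi')

end IsIncidenceVector

theorem abs_det_le_one_of_isIncidenceVector : ∀ {r : ℕ} (Z : Matrix (Fin r) (Fin r) ℤ),
    (∀ c, IsIncidenceVector fun i => Z i c) → |Z.det| ≤ 1
  | 0, Z, _ => by simp
  | r + 1, Z, hZ => by
    -- Either some column has at most one nonzero entry and we expand along it,
    -- or every column sums to zero.
    by_cases hsparse : ∃ c, ∀ i i', Z i c ≠ 0 → Z i' c ≠ 0 → i = i'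
    · obtain ⟨c, hc⟩ := hsparse
      by_cases hzero : ∀ i, Z i c = 0
      · simp [det_eq_zero_of_column_eq_zero c hzero]
      push Not at hzero
      obtain ⟨i₀, hi₀⟩ := hzero
      have hminor := abs_det_le_one_of_isIncidenceVector (Z.submatrix i₀.succAbove c.succAbove)
        fun c' => (hZ (c.succAbove c')).comp Fin.succAbove_right_injective
      rw [det_succ_column Z c, Finset.sum_eq_single i₀
        (fun i _ hi => by rw [not_not.mp fun h => hi (hc i i₀ h hi₀)]; ring) (by simp),
        abs_mul, abs_mul, abs_pow, abs_neg, abs_one, one_pow, one_mul]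
      exact mul_le_one₀ ((hZ c).abs_le_one i₀) (abs_nonneg _) hminor
    · push Not at hsparse
      suffices h : (fun _ => (1 : ℤ)) ᵥ* Z = 0 by
        rw [exists_vecMul_eq_zero_iff.mp ⟨_, one_ne_zero, h⟩, abs_zero]
        exact zero_le_one
      ext c
      obtain ⟨i, i', hi, hi', hne⟩ := hsparse c
      simpa [vecMul, dotProduct] using (hZ c).sum_eq_zero hne hi hi'

/-- The successive differences of a `0/1` sequence whose ones form an interval `[a, b]` are
`1` at `b`, `-1` at `a - 1`, and `0` elsewhere. -/
lemma isIncidenceVector_sub_succ {w : ℕ → ℤ} (hw : ∀ k, w k = 0 ∨ w k = 1)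
    (hconn : {k | w k = 1}.OrdConnected) : IsIncidenceVector fun k => w k - w (k + 1) := by
  have mem {a b c : ℕ} (hab : a ≤ b) (hbc : b ≤ c) (ha : w a = 1) (hc : w c = 1) : w b = 1 :=
    hconn.out ha hc ⟨hab, hbc⟩
  have one_iff (k : ℕ) : w k - w (k + 1) = 1 ↔ w k = 1 ∧ w (k + 1) = 0 := by
    rcases hw k with h | h <;> rcases hw (k + 1) with h' | h' <;> simp [h, h']
  have neg_one_iff (k : ℕ) : w k - w (k + 1) = -1 ↔ w k = 0 ∧ w (k + 1) = 1 := by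
    rcases hw k with h | h <;> rcases hw (k + 1) with h' | h' <;> simp [h, h']
  refine ⟨fun k => ?_, fun {i j} hi hj => ?_, fun {i j} hi hj => ?_⟩
  · rcases hw k with h | h <;> rcases hw (k + 1) with h' | h' <;> simp [h, h']
  · by_contra hne
    wlog hij : i < j generalizing i j
    · exact this hj hi (Ne.symm hne) (by omega)
    rw [one_iff] at hi hj
    have := mem (Nat.le_add_right i 1) hij hi.1 hj.1
    omega
  · by_contra hne
    wlog hij : i < j generalizing i j
    · exact this hj hi (Ne.symm hne) (by omega)
    rw [neg_one_iff] at hi hj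
    have := mem hij (Nat.le_add_right j 1) hi.2 hj.2
    omega

def natExtend {r : ℕ} (z : Fin r → ℤ) (k : ℕ) : ℤ := if h : k < r then z ⟨k, h⟩ else 0

lemma natExtend_ordConnected {r : ℕ} {z : Fin r → ℤ} (hz : {i | z i = 1}.OrdConnected) :
    {k | natExtend z k = 1}.OrdConnected := by
  refine ⟨fun a ha b hb k ⟨hak, hkb⟩ => ?_⟩
  have hbr : b < r := by
    by_contra h
    simp [natExtend, h] at hb
  simp only [Set.mem_ofPred_eq, natExtend, dif_pos hbr, dif_pos (hkb.trans_lt hbr),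
    dif_pos ((hak.trans hkb).trans_lt hbr)] at ha hb ⊢
  exact hz.out ha hb ⟨hak, hkb⟩

lemma natExtend_eq_zero_or_eq_one {r : ℕ} {z : Fin r → ℤ} (hz : ∀ i, z i = 0 ∨ z i = 1)
    (k : ℕ) : natExtend z k = 0 ∨ natExtend z k = 1 := by
  unfold natExtend
  split_ifs
  exacts [hz _, Or.inl rfl]

lemma sum_ite_val_eq_natExtend {r : ℕ} (z : Fin r → ℤ) (k : ℕ) :
    ∑ j : Fin r, (if (j : ℕ) = k then z j else 0) = natExtend z k := by
  unfold natExtend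
  split_ifs with hk
  · rw [Finset.sum_eq_single ⟨k, hk⟩ (fun j _ hj => if_neg fun h => hj (Fin.ext h)) (by simp)]
    simp
  · exact Finset.sum_eq_zero fun j _ => if_neg fun (h : (j : ℕ) = k) => hk (h ▸ j.isLt)

def diffMatrix (r : ℕ) : Matrix (Fin r) (Fin r) ℤ :=
  1 - of fun i j : Fin r => if (j : ℕ) = i + 1 then 1 else 0

lemma det_diffMatrix (r : ℕ) : (diffMatrix r).det = 1 := by
  rw [det_of_isUpperTriangular fun i j (hji : j < i) => ?_]
  · simp [diffMatrix]
  · have : (j : ℕ) ≠ i + 1 := by omega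
    simp [diffMatrix, one_apply_ne hji.ne', this]

lemma diffMatrix_mul_apply {r : ℕ} {ι : Type*} (Z : Matrix (Fin r) ι ℤ) (i : Fin r) (c : ι) :
    (diffMatrix r * Z) i c =
      natExtend (fun i => Z i c) i - natExtend (fun i => Z i c) (i + 1) := by
  rw [diffMatrix, Matrix.sub_mul, Matrix.one_mul, Matrix.sub_apply, mul_apply,
    ← sum_ite_val_eq_natExtend _ ((i : ℕ) + 1)]
  simp [natExtend]

theorem abs_det_le_one_of_ordConnected {r : ℕ} (Z : Matrix (Fin r) (Fin r) ℤ)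
    (h01 : ∀ i c, Z i c = 0 ∨ Z i c = 1) (hconn : ∀ c, {i | Z i c = 1}.OrdConnected) :
    |Z.det| ≤ 1 := by
  rw [show Z.det = (diffMatrix r * Z).det by rw [det_mul, det_diffMatrix, one_mul]]
  refine abs_det_le_one_of_isIncidenceVector _ fun c => ?_
  have := (isIncidenceVector_sub_succ (natExtend_eq_zero_or_eq_one fun i => h01 i c)
    (natExtend_ordConnected (hconn c))).comp (Fin.val_injective (n := r))
  simpa [Function.comp_def, diffMatrix_mul_apply] using this

theorem det_modEq_det {ι : Type*} [Fintype ι] [DecidableEq ι] {q : ℕ} {Z Z' : Matrix ι ι ℤ}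
    (h : ∀ i j, Z i j ≡ Z' i j [ZMOD q]) : Z.det ≡ Z'.det [ZMOD q] := by
  rw [← ZMod.intCast_eq_intCast_iff, Int.cast_det, Int.cast_det]
  congr 1
  ext i j
  exact (ZMod.intCast_eq_intCast_iff _ _ _).mpr (h i j)

theorem sq_det_le_sq_det_of_modEq_two {ι : Type*} [Fintype ι] [DecidableEq ι]
    {Z Z' : Matrix ι ι ℤ} (hZ : |Z.det| ≤ 1) (h : ∀ i j, Z i j ≡ Z' i j [ZMOD 2]) :
    Z.det ^ 2 ≤ Z'.det ^ 2 := by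
  have hmod : Z.det ≡ Z'.det [ZMOD 2] := det_modEq_det h
  rcases eq_or_ne Z.det 0 with h0 | h0
  · rw [h0]; positivity
  have h1 : Z.det ^ 2 = 1 := by
    rw [← sq_abs, le_antisymm hZ (Int.one_le_abs h0), one_pow]
  have h1' : Z'.det ≠ 0 := by
    rintro h0'
    rw [Int.ModEq, h0'] at hmod
    have := abs_le.mp hZ
    omega
  rw [h1, ← sq_abs]
  exact one_le_pow₀ (Int.one_le_abs h1')

lemma abs_eq_abs_of_modEq_two {a b : ℤ} (ha : a = 0 ∨ a = 1) (hb : b = -1 ∨ b = 0 ∨ b = 1)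
    (h : b ≡ a [ZMOD 2]) : |b| = |a| := by
  rcases ha with rfl | rfl <;> rcases hb with rfl | rfl | rfl <;> revert h <;> decide

section CauchyBinet

variable {m ι R : Type*} [Fintype m] [DecidableEq m] [Fintype ι] [CommRing R]

theorem Matrix.det_mul_eq_sum_prod_mul_det_s10 (A : Matrix m ι R) (B : Matrix ι m R) :
    (A * B).det = ∑ g : m → ι, (∏ i, A i (g i)) * (B.submatrix g id).det := by
  have hrows : A * B = of fun i => ∑ c, A i c • B c := by
    ext i j
    simp [mul_apply, Finset.sum_apply]
  rw [hrows]
  change (detRowAlternating : (m → R) [⋀^m]→ₗ[R] R).toMultilinearMap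
    (fun i => ∑ c, A i c • B c) = _
  rw [MultilinearMap.map_sum]
  refine Finset.sum_congr rfl fun g _ => ?_
  rw [MultilinearMap.map_smul_univ]
  rfl

/-- Cauchy–Binet, summed over all maps `m → ι` rather than over `card m`-subsets of `ι`. -/
theorem Matrix.factorial_card_mul_det_mul (A : Matrix m ι R) (B : Matrix ι m R) :
    ((Fintype.card m).factorial : R) * (A * B).det =
      ∑ g : m → ι, (A.submatrix id g).det * (B.submatrix g id).det := by
  have hperm (σ : Equiv.Perm m) : (A * B).det =
      ∑ g : m → ι, Equiv.Perm.sign σ * (∏ i, A (σ i) (g i)) * (B.submatrix g id).det := by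
    rw [det_mul_eq_sum_prod_mul_det_s10]
    refine Fintype.sum_equiv (σ.symm.arrowCongr (Equiv.refl ι)) _ _ fun h => ?_
    change _ = _ * (∏ i, A (σ i) (h (σ i))) * ((B.submatrix h id).submatrix σ id).det
    have hsign : ((Equiv.Perm.sign σ : ℤ) : R) * (Equiv.Perm.sign σ : ℤ) = 1 := by
      rw [← Int.cast_mul, ← Units.val_mul, Int.units_mul_self, Units.val_one, Int.cast_one]
    rw [det_permute, Equiv.prod_comp σ fun i => A i (h i)]
    linear_combination -((∏ i, A i (h i)) * (B.submatrix h id).det) * hsign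
  calc ((Fintype.card m).factorial : R) * (A * B).det
      = ∑ σ : Equiv.Perm m, (A * B).det := by simp [Fintype.card_perm]
    _ = ∑ σ : Equiv.Perm m, ∑ g : m → ι,
          Equiv.Perm.sign σ * (∏ i, A (σ i) (g i)) * (B.submatrix g id).det :=
      Finset.sum_congr rfl fun σ _ => hperm σ
    _ = ∑ g : m → ι, (A.submatrix id g).det * (B.submatrix g id).det := by
      rw [Finset.sum_comm]
      refine Finset.sum_congr rfl fun g _ => ?_
      rw [det_apply' (A.submatrix id g), Finset.sum_mul]
      rfl

theorem Matrix.factorial_card_mul_det_mul_diagonal_mul_transpose [DecidableEq ι]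
    (N : Matrix m ι R) (w : ι → R) :
    ((Fintype.card m).factorial : R) * (N * diagonal w * Nᵀ).det =
      ∑ g : m → ι, (∏ i, w (g i)) * (N.submatrix id g).det ^ 2 := by
  rw [factorial_card_mul_det_mul]
  refine Finset.sum_congr rfl fun g _ => ?_
  have hcols :
      (N * diagonal w).submatrix id g = of fun i j => w (g j) * N.submatrix id g i j := by
    ext i j
    simp [mul_comm]
  rw [hcols, det_mul_row, ← transpose_submatrix, det_transpose, sq, mul_assoc]

variable [LinearOrder R] [IsStrictOrderedRing R]

theorem Matrix.det_mul_diagonal_mul_transpose_le [DecidableEq ι] (N N' : Matrix m ι R)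
    {w : ι → R} (hw : ∀ c, 0 ≤ w c)
    (h : ∀ g : m → ι, (N.submatrix id g).det ^ 2 ≤ (N'.submatrix id g).det ^ 2) :
    (N * diagonal w * Nᵀ).det ≤ (N' * diagonal w * N'ᵀ).det := by
  rw [← mul_le_mul_iff_right₀ (Nat.cast_pos.mpr (Fintype.card m).factorial_pos),
    factorial_card_mul_det_mul_diagonal_mul_transpose,
    factorial_card_mul_det_mul_diagonal_mul_transpose]
  exact Finset.sum_le_sum fun g _ =>
    mul_le_mul_of_nonneg_left (h g) (Finset.prod_nonneg fun i _ => hw (g i))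

end CauchyBinet

theorem det_intCast_mul_diagonal_mul_transpose_le {r : ℕ} {ι : Type*} [Fintype ι]
    [DecidableEq ι] {N N' : Matrix (Fin r) ι ℤ} (h01 : ∀ i c, N i c = 0 ∨ N i c = 1)
    (hconn : ∀ c, {i | N i c = 1}.OrdConnected) (hmod : ∀ i c, N i c ≡ N' i c [ZMOD 2])
    {w : ι → ℝ} (hw : ∀ c, 0 ≤ w c) :
    (N.map (Int.cast : ℤ → ℝ) * diagonal w * (N.map (Int.cast : ℤ → ℝ))ᵀ).det ≤
      (N'.map (Int.cast : ℤ → ℝ) * diagonal w * (N'.map (Int.cast : ℤ → ℝ))ᵀ).det := by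
  refine det_mul_diagonal_mul_transpose_le _ _ hw fun g => ?_
  rw [submatrix_map, submatrix_map, ← Int.cast_det, ← Int.cast_det]
  exact_mod_cast sq_det_le_sq_det_of_modEq_two
    (abs_det_le_one_of_ordConnected _ (fun i c => h01 i (g c)) fun c => hconn (g c))
    fun i c => hmod i (g c)

def stackedCols {K n : ℕ} {m : Fin K → ℕ} (M : ∀ k : Fin K, Matrix (Fin n) (Fin (m k)) ℤ) :
    Matrix (Fin n) ((Σ k, Fin (m k)) ⊕ Fin n) ℤ :=
  fromCols (of fun i a => M a.1 i a.2) 1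

theorem smul_one_add_sum_eq_stackedCols {K n : ℕ} {m : Fin K → ℕ}
    (M : ∀ k : Fin K, Matrix (Fin n) (Fin (m k)) ℤ) (t : Fin K → ℝ) (s : ℝ) :
    s • (1 : Matrix (Fin n) (Fin n) ℝ) + ∑ k, t k • ((M k * (M k)ᵀ).map ((↑) : ℤ → ℝ)) =
      (stackedCols M).map (Int.cast : ℤ → ℝ) *
          diagonal (Sum.elim (fun a : Σ k, Fin (m k) => t a.1) fun _ : Fin n => s) *
        ((stackedCols M).map (Int.cast : ℤ → ℝ))ᵀ := by
  ext i j
  rw [mul_apply, Fintype.sum_sum_type]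
  simp only [mul_diagonal]
  simp [stackedCols, Fintype.sum_sigma, one_apply, Matrix.sum_apply, mul_apply, Finset.mul_sum,
    add_comm, mul_assoc, mul_left_comm]

theorem det_smul_one_add_sum_le {K n : ℕ} {m : Fin K → ℕ}
    {M M' : ∀ k : Fin K, Matrix (Fin n) (Fin (m k)) ℤ}
    (h01 : ∀ k i j, M k i j = 0 ∨ M k i j = 1) (hconn : ∀ k j, {i | M k i j = 1}.OrdConnected)
    (hmod : ∀ k i j, M k i j ≡ M' k i j [ZMOD 2]) {t : Fin K → ℝ} (ht : ∀ k, 0 ≤ t k) {s : ℝ}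
    (hs : 0 ≤ s) :
    (s • (1 : Matrix (Fin n) (Fin n) ℝ) +
        ∑ k, t k • ((M k * (M k)ᵀ).map ((↑) : ℤ → ℝ))).det ≤
      (s • (1 : Matrix (Fin n) (Fin n) ℝ) +
        ∑ k, t k • ((M' k * (M' k)ᵀ).map ((↑) : ℤ → ℝ))).det := by
  rw [smul_one_add_sum_eq_stackedCols, smul_one_add_sum_eq_stackedCols]
  refine det_intCast_mul_diagonal_mul_transpose_le (fun i c => ?_) (fun c => ?_)
    (fun i c => ?_) ?_
  · rcases c with ⟨k, j⟩ | j
    · exact h01 k i j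
    · by_cases h : i = j <;> simp [stackedCols, one_apply, h]
  · rcases c with ⟨k, j⟩ | j
    · exact hconn k j
    · have : {i | stackedCols M i (Sum.inr j) = 1} = {j} := by
        ext i
        by_cases h : i = j <;> simp [stackedCols, one_apply, h]
      rw [this]
      exact Set.ordConnected_singleton
  · rcases c with ⟨k, j⟩ | j
    · exact hmod k i j
    · rfl
  · rintro (a | _)
    exacts [ht a.1, hs]

lemma intCast_map_mul_transpose {m ι : Type*} [Fintype ι] (X : Matrix m ι ℤ) :
    (X * Xᵀ).map (Int.cast : ℤ → ℝ) =
      X.map (Int.cast : ℤ → ℝ) * (X.map (Int.cast : ℤ → ℝ))ᵀ := by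
  ext i j
  simp [mul_apply]

section Gram

variable {κ m : Type*} {ι : κ → Type*} [Fintype κ] [Fintype m] [∀ k, Fintype (ι k)]

lemma posSemidef_sum_smul_mul_transpose (X : ∀ k, Matrix m (ι k) ℝ) {t : κ → ℝ}
    (ht : ∀ k, 0 ≤ t k) : (∑ k, t k • (X k * (X k)ᵀ)).PosSemidef :=
  posSemidef_sum _ fun k _ => by
    simpa [conjTranspose_eq_transpose_of_trivial] using
      (posSemidef_self_mul_conjTranspose (X k)).smul (ht k)

lemma trace_sum_smul_mul_transpose_congr {X Y : ∀ k, Matrix m (ι k) ℝ} (t : κ → ℝ)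
    (h : ∀ k i j, |X k i j| = |Y k i j|) :
    (∑ k, t k • (X k * (X k)ᵀ)).trace = (∑ k, t k • (Y k * (Y k)ᵀ)).trace := by
  rw [trace_sum, trace_sum]
  refine Finset.sum_congr rfl fun k _ => ?_
  rw [trace_smul, trace_smul]
  congr 1
  simp only [trace, diag_apply, mul_apply, transpose_apply]
  refine Finset.sum_congr rfl fun i _ => Finset.sum_congr rfl fun j _ => ?_
  rw [← abs_mul_abs_self, h, abs_mul_abs_self]

end Gram

theorem Matrix.IsHermitian.det_smul_one_add {𝕜 n : Type*} [RCLike 𝕜] [Fintype n]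
    [DecidableEq n] {A : Matrix n n 𝕜} (hA : A.IsHermitian) (s : ℝ) :
    (s • (1 : Matrix n n 𝕜) + A).det = ∏ i, ((s + hA.eigenvalues i : ℝ) : 𝕜) := by
  have hcfc : s • (1 : Matrix n n 𝕜) + A = cfc (fun x => s + x) A := by
    rw [cfc_const_add s (fun x => x) A, cfc_id' ℝ A, Algebra.algebraMap_eq_smul_one]
  rw [hcfc, hA.cfc_eq]
  simp [IsHermitian.cfc, -Unitary.conjStarAlgAut_apply]

section LogKernel

open Real Set MeasureTheory

noncomputable def logKernel (p x s : ℝ) : ℝ := s ^ (p - 2) * (x - s * log (1 + x / s))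

variable {p x s : ℝ}

lemma sub_mul_log_one_add_div_nonneg (hx : 0 ≤ x) (hs : 0 < s) :
    0 ≤ x - s * log (1 + x / s) := by
  have hlog := log_le_sub_one_of_pos (x := 1 + x / s) (by positivity)
  have : s * log (1 + x / s) ≤ x := by
    calc s * log (1 + x / s) ≤ s * (x / s) := by gcongr; linarith
      _ = x := mul_div_cancel₀ x hs.ne'
  linarith

lemma sub_mul_log_one_add_div_le_self (hx : 0 ≤ x) (hs : 0 < s) :
    x - s * log (1 + x / s) ≤ x := by
  have : 0 ≤ log (1 + x / s) := log_nonneg (by linarith [div_nonneg hx hs.le])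
  nlinarith

lemma sub_mul_log_one_add_div_le_sq_div (hx : 0 ≤ x) (hs : 0 < s) :
    x - s * log (1 + x / s) ≤ x ^ 2 / s := by
  have hlog := one_sub_inv_le_log_of_pos (x := 1 + x / s) (by positivity)
  have hinv : 1 - (1 + x / s)⁻¹ = x / (s + x) := by field_simp; ring
  have hsx : 0 < s + x := by linarith
  calc x - s * log (1 + x / s) ≤ x - s * (x / (s + x)) := by rw [← hinv]; gcongr
    _ = x ^ 2 / (s + x) := by field_simp; ring
    _ ≤ x ^ 2 / s := by gcongr; linarith

lemma logKernel_nonneg (hx : 0 ≤ x) (hs : 0 < s) : 0 ≤ logKernel p x s :=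
  mul_nonneg (rpow_nonneg hs.le _) (sub_mul_log_one_add_div_nonneg hx hs)

lemma continuousOn_logKernel (hx : 0 ≤ x) : ContinuousOn (logKernel p x) (Ioi 0) := by
  have hpos : ∀ s ∈ Ioi (0 : ℝ), 0 < 1 + x / s := fun s (hs : 0 < s) => by positivity
  unfold logKernel
  exact ((continuousOn_id.rpow_const fun s hs => Or.inl (ne_of_gt hs)).mul
    (continuousOn_const.sub (continuousOn_id.mul ((continuousOn_const.add
      (continuousOn_const.div continuousOn_id fun s hs => ne_of_gt hs)).log
        fun s hs => (hpos s hs).ne'))))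

/-- Near `0` the kernel is `O(s ^ (p - 2))`, near `∞` it is `O(s ^ (p - 3))`. -/
lemma integrableOn_logKernel (hp1 : 1 < p) (hp2 : p < 2) (hx : 0 ≤ x) :
    IntegrableOn (logKernel p x) (Ioi 0) := by
  rw [← Ioc_union_Ioi_eq_Ioi zero_le_one, integrableOn_union]
  constructor
  · have hbound : IntegrableOn (fun s : ℝ => s ^ (p - 2) * x) (Ioc 0 1) :=
      (intervalIntegral.intervalIntegrable_rpow' (a := 0) (b := 1) (by linarith)).1.mul_const x
    refine hbound.mono'
      (((continuousOn_logKernel hx).mono Ioc_subset_Ioi_self).aestronglyMeasurable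
        measurableSet_Ioc) ?_
    filter_upwards [ae_restrict_mem measurableSet_Ioc] with s hs'
    have hs : 0 < s := hs'.1
    rw [norm_of_nonneg (logKernel_nonneg hx hs)]
    exact mul_le_mul_of_nonneg_left (sub_mul_log_one_add_div_le_self hx hs)
      (rpow_nonneg hs.le _)
  · have hbound : IntegrableOn (fun s : ℝ => s ^ (p - 3) * x ^ 2) (Ioi 1) :=
      ((integrableOn_Ioi_rpow_iff one_pos).mpr (by linarith)).mul_const _
    refine hbound.mono'
      (((continuousOn_logKernel hx).mono (Ioi_subset_Ioi zero_le_one)).aestronglyMeasurable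
        measurableSet_Ioi) ?_
    filter_upwards [ae_restrict_mem measurableSet_Ioi] with s (hs : 1 < s)
    have hs0 : 0 < s := one_pos.trans hs
    rw [norm_of_nonneg (logKernel_nonneg hx hs0)]
    calc logKernel p x s ≤ s ^ (p - 2) * (x ^ 2 / s) :=
          mul_le_mul_of_nonneg_left (sub_mul_log_one_add_div_le_sq_div hx hs0)
            (rpow_nonneg hs0.le _)
      _ = s ^ (p - 3) * x ^ 2 := by
          rw [show p - 3 = p - 2 - 1 by ring, rpow_sub_one hs0.ne']
          ring

lemma integral_logKernel (hp : 0 < p) (hx : 0 ≤ x) :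
    ∫ s in Ioi 0, logKernel p x s = x ^ p * ∫ s in Ioi 0, logKernel p 1 s := by
  rcases hx.eq_or_lt with rfl | hx
  · simp [logKernel, zero_rpow hp.ne']
  have hscale : ∀ u ∈ Ioi (0 : ℝ), logKernel p x (x * u) = x ^ (p - 1) * logKernel p 1 u := by
    intro u (hu : 0 < u)
    rw [logKernel, logKernel, mul_rpow hx.le hu.le, div_mul_cancel_left₀ hx.ne',
      show p - 2 = p - 1 - 1 by ring, rpow_sub_one hx.ne', one_div]
    field_simp
  have h := integral_comp_mul_left_Ioi (logKernel p x) 0 hx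
  rw [mul_zero, setIntegral_congr_fun measurableSet_Ioi hscale, integral_const_mul,
    smul_eq_mul, eq_inv_mul_iff_mul_eq₀ hx.ne'] at h
  rw [← h, ← mul_assoc, ← rpow_one_add' hx.le (by linarith), add_sub_cancel]

lemma integral_logKernel_one_pos (hp1 : 1 < p) (hp2 : p < 2) :
    0 < ∫ s in Ioi 0, logKernel p 1 s := by
  have hsupp : Ioi 0 ⊆ Function.support (logKernel p 1) := by
    intro s (hs : 0 < s)
    have hlog := log_lt_sub_one_of_pos (x := 1 + 1 / s) (by positivity) (by simp [hs.ne'])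
    have : s * log (1 + 1 / s) < 1 := by
      calc s * log (1 + 1 / s) < s * (1 / s) := by gcongr; linarith
        _ = 1 := mul_one_div_cancel hs.ne'
    exact (mul_pos (rpow_pos_of_pos hs _) (by linarith)).ne'
  rw [setIntegral_pos_iff_support_of_nonneg_ae
    (ae_restrict_of_forall_mem measurableSet_Ioi fun s hs => logKernel_nonneg zero_le_one hs)
    (integrableOn_logKernel hp1 hp2 zero_le_one), inter_eq_right.mpr hsupp, volume_Ioi]
  exact ENNReal.zero_lt_top

end LogKernel

section Majorization

open Real Set MeasureTheory

variable {ι : Type*} [Fintype ι] {x y : ι → ℝ}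

lemma sum_logKernel_le (hx : ∀ i, 0 ≤ x i) (hy : ∀ i, 0 ≤ y i) (hsum : ∑ i, y i = ∑ i, x i)
    (p : ℝ) {s : ℝ} (hs : 0 < s) (hprod : ∏ i, (s + x i) ≤ ∏ i, (s + y i)) :
    ∑ i, logKernel p (y i) s ≤ ∑ i, logKernel p (x i) s := by
  have hscale (z : ι → ℝ) : ∏ i, (1 + z i / s) = (∏ i, (s + z i)) / s ^ Fintype.card ι := by
    rw [← Finset.card_univ, ← Finset.prod_const, ← Finset.prod_div_distrib]
    exact Finset.prod_congr rfl fun i _ => by field_simp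
  have hlog : ∑ i, log (1 + x i / s) ≤ ∑ i, log (1 + y i / s) := by
    rw [← log_prod fun i _ => by have := hx i; positivity,
      ← log_prod fun i _ => by have := hy i; positivity, hscale, hscale]
    exact log_le_log (div_pos (Finset.prod_pos fun i _ => by have := hx i; positivity)
      (by positivity)) (div_le_div_of_nonneg_right hprod (by positivity))
  simp only [logKernel, ← Finset.mul_sum, Finset.sum_sub_distrib, hsum]
  gcongr

theorem sum_rpow_le_sum_rpow_of_prod_add_le (hx : ∀ i, 0 ≤ x i) (hy : ∀ i, 0 ≤ y i)
    (hsum : ∑ i, y i = ∑ i, x i) (hprod : ∀ s > 0, ∏ i, (s + x i) ≤ ∏ i, (s + y i))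
    {p : ℝ} (hp1 : 1 ≤ p) (hp2 : p ≤ 2) : ∑ i, y i ^ p ≤ ∑ i, x i ^ p := by
  have hIoo : ∀ p ∈ Ioo (1 : ℝ) 2, ∑ i, y i ^ p ≤ ∑ i, x i ^ p := by
    rintro p ⟨hp1, hp2⟩
    have hrepr (z : ι → ℝ) (hz : ∀ i, 0 ≤ z i) :
        (∫ s in Ioi 0, logKernel p 1 s) * ∑ i, z i ^ p =
          ∫ s in Ioi 0, ∑ i, logKernel p (z i) s := by
      rw [integral_finsetSum _ fun i _ => integrableOn_logKernel hp1 hp2 (hz i), Finset.mul_sum]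
      refine Finset.sum_congr rfl fun i _ => ?_
      rw [integral_logKernel (by linarith) (hz i), mul_comm]
    refine le_of_mul_le_mul_left ?_ (integral_logKernel_one_pos hp1 hp2)
    rw [hrepr y hy, hrepr x hx]
    exact setIntegral_mono_on
      (integrable_finsetSum _ fun i _ => integrableOn_logKernel hp1 hp2 (hy i))
      (integrable_finsetSum _ fun i _ => integrableOn_logKernel hp1 hp2 (hx i))
      measurableSet_Ioi fun s hs => sum_logKernel_le hx hy hsum p hs (hprod s hs)
  have hcont (z : ι → ℝ) : ContinuousOn (fun p : ℝ => ∑ i, z i ^ p) (closure (Ioo 1 2)) := by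
    rw [closure_Ioo (by norm_num)]
    exact continuousOn_finsetSum _ fun i _ p hp =>
      (continuousAt_const_rpow' (by linarith [hp.1] : p ≠ 0)).continuousWithinAt
  exact le_on_closure hIoo (hcont y) (hcont x)
    (by rw [closure_Ioo (by norm_num)]; exact ⟨hp1, hp2⟩)

end Majorization

theorem stmt10_general (K n : ℕ) (m : Fin K → ℕ)
    (M M' : ∀ k : Fin K, Matrix (Fin n) (Fin (m k)) ℤ)
    (h01 : ∀ k i j, M k i j = 0 ∨ M k i j = 1)
    (hint : ∀ k j, ∀ i₁ i₂ i₃ : Fin n, i₁ ≤ i₂ → i₂ ≤ i₃ →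
      M k i₁ j = 1 → M k i₃ j = 1 → M k i₂ j = 1)
    (h101 : ∀ k i j, M' k i j = -1 ∨ M' k i j = 0 ∨ M' k i j = 1)
    (hmod : ∀ k i j, M' k i j ≡ M k i j [ZMOD 2])
    (t : Fin K → ℝ) (ht : ∀ k, 0 ≤ t k) (p : ℝ) (hp1 : 1 ≤ p) (hp2 : p ≤ 2)
    (A A' : Matrix (Fin n) (Fin n) ℝ)
    (hAdef : A = ∑ k, t k • ((M k * (M k)ᵀ).map ((↑) : ℤ → ℝ)))
    (hA'def : A' = ∑ k, t k • ((M' k * (M' k)ᵀ).map ((↑) : ℤ → ℝ)))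
    (hA : A.IsHermitian) (hA' : A'.IsHermitian) :
    (∑ i, (hA'.eigenvalues i) ^ p) ^ (1 / p) ≤
      (∑ i, (hA.eigenvalues i) ^ p) ^ (1 / p) := by
  have hgram (N : ∀ k : Fin K, Matrix (Fin n) (Fin (m k)) ℤ) :
      ∑ k, t k • ((N k * (N k)ᵀ).map ((↑) : ℤ → ℝ)) =
        ∑ k, t k • ((N k).map (Int.cast : ℤ → ℝ) * ((N k).map (Int.cast : ℤ → ℝ))ᵀ) := by
    simp only [intCast_map_mul_transpose]
  have hPSD : A.PosSemidef := by
    rw [hAdef, hgram]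
    exact posSemidef_sum_smul_mul_transpose _ ht
  have hPSD' : A'.PosSemidef := by
    rw [hA'def, hgram]
    exact posSemidef_sum_smul_mul_transpose _ ht
  have htrace : A'.trace = A.trace := by
    rw [hAdef, hA'def, hgram, hgram]
    refine trace_sum_smul_mul_transpose_congr t fun k i j => ?_
    simp only [map_apply, ← Int.cast_abs,
      abs_eq_abs_of_modEq_two (h01 k i j) (h101 k i j) (hmod k i j)]
  have hconn (k j) : {i | M k i j = 1}.OrdConnected :=
    ⟨fun a ha b hb i hi => hint k j a i b hi.1 hi.2 ha hb⟩
  have hdet (s : ℝ) (hs : 0 < s) : (s • 1 + A).det ≤ (s • 1 + A').det := by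
    rw [hAdef, hA'def]
    exact det_smul_one_add_sum_le h01 hconn (fun k i j => (hmod k i j).symm) ht hs.le
  refine Real.rpow_le_rpow
    (Finset.sum_nonneg fun i _ => Real.rpow_nonneg (hPSD'.eigenvalues_nonneg i) p)
    (sum_rpow_le_sum_rpow_of_prod_add_le hPSD.eigenvalues_nonneg hPSD'.eigenvalues_nonneg ?_
      (fun s hs => ?_) hp1 hp2) (by positivity)
  · simpa [hA.trace_eq_sum_eigenvalues, hA'.trace_eq_sum_eigenvalues] using htrace
  · simpa [hA.det_smul_one_add, hA'.det_smul_one_add] using hdet s hs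

theorem stmt10 (K n : ℕ) (hK : 0 < K) (hn : 0 < n) (m : Fin K → ℕ)
    (M M' : ∀ k : Fin K, Matrix (Fin n) (Fin (m k)) ℤ)
    (h01 : ∀ k i j, M k i j = 0 ∨ M k i j = 1)
    (hint : ∀ k j, ∀ i₁ i₂ i₃ : Fin n, i₁ ≤ i₂ → i₂ ≤ i₃ →
      M k i₁ j = 1 → M k i₃ j = 1 → M k i₂ j = 1)
    (h101 : ∀ k i j, M' k i j = -1 ∨ M' k i j = 0 ∨ M' k i j = 1)
    (hmod : ∀ k i j, M' k i j ≡ M k i j [ZMOD 2])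
    (t : Fin K → ℝ) (ht : ∀ k, 0 ≤ t k) (p : ℝ) (hp1 : 1 ≤ p) (hp2 : p ≤ 2)
    (A A' : Matrix (Fin n) (Fin n) ℝ)
    (hAdef : A = ∑ k, t k • ((M k * (M k)ᵀ).map ((↑) : ℤ → ℝ)))
    (hA'def : A' = ∑ k, t k • ((M' k * (M' k)ᵀ).map ((↑) : ℤ → ℝ)))
    (hA : A.IsHermitian) (hA' : A'.IsHermitian) :
    (∑ i, (hA'.eigenvalues i) ^ p) ^ (1 / p) ≤
      (∑ i, (hA.eigenvalues i) ^ p) ^ (1 / p) :=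
  stmt10_general K n m M M' h01 hint h101 hmod t ht p hp1 hp2 A A' hAdef hA'def hA hA'
end
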